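/- arXiv:1809.07833 — 2 statements merged into one kernel-verified Lean document; each statement's English description precedes it below -/
import Mathlib

section
/- Let G_1 and G_2 be disjoint finite bipartite graphs, v ∈ G_1, w ∈ G_2. If every even coefficient b_{2k} of φ(G_1 ∪ (G_2 - w); x) is at least the corresponding coefficient of φ(G_2 ∪ (G_1 - v); x), then E_{G_2}(w) ≤ E_{G_1}(v). -/
/-!
For a Hermitian `A` with eigenpairs `(λⱼ, φⱼ)` and a vertex `u`, the weights `wⱼ = φⱼ(u)²` sum
to `1`, give `|A|ᵤᵤ = ∑ wⱼ |λⱼ|`, and give the vertex-deleted characteristic polynomial as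
`φ(A - u; x) = ∑ wⱼ ∏_{k ≠ j} (x - λₖ)`, i.e. `φ(A - u; z) / φ(A; z) = ∑ wⱼ / (z - λⱼ) =: G(z)`.
Evaluating the two product identities at `z = t i`, `t > 0`, gives `γ(t) G₂(t i) = β(t) G₁(t i)`
with `β(t) = ∑ b_k t^{N-2k} > 0` and `γ(t) = ∑ c_k t^{N-2k} ≤ β(t)`; since
`Im G(t i) = -t ∑ wⱼ / (λⱼ² + t²)`, this compares the sums `∑ wⱼ / (λⱼ² + t²)` for every `t > 0`.
Coulson's formula `π |λ| = ∫ λ² / (λ² + t²) dt = ∫ (1 - t² / (λ² + t²)) dt` integrates that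
comparison into the comparison of vertex energies.
-/

open Matrix BigOperators Finset Polynomial

noncomputable def adjMat {V : Type*} [Fintype V] (G : SimpleGraph V) : Matrix V V ℝ :=
  letI := Classical.decRel G.Adj; G.adjMatrix ℝ

noncomputable def absMat {V : Type*} [Fintype V] [DecidableEq V] (A : Matrix V V ℝ) :
    Matrix V V ℝ :=
  (Matrix.posSemidef_self_mul_conjTranspose A).1.eigenvectorUnitary.1 *
    diagonal ((↑) ∘ (√·) ∘ (Matrix.posSemidef_self_mul_conjTranspose A).1.eigenvalues) *
    (star (Matrix.posSemidef_self_mul_conjTranspose A).1.eigenvectorUnitary : Matrix V V ℝ)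

/-- The energy of a vertex: the (i,i) entry of |A| = (A Aᴴ)^{1/2}. -/
noncomputable def vertexEnergy {V : Type*} [Fintype V] [DecidableEq V]
    (G : SimpleGraph V) (i : V) : ℝ :=
  absMat (adjMat G) i i

/-- The shape `∑ (-1)ᵏ b_{2k} x^{N-2k}` of the characteristic polynomial of a bipartite graph,
with `b k` standing for `b_{2k}`. -/
noncomputable def alternatingEvenPoly (N : ℕ) (b : ℕ → ℝ) : ℝ[X] :=
  ∑ k ∈ range (N / 2 + 1), C ((-1 : ℝ) ^ k * b k) * X ^ (N - 2 * k)

theorem coeff_alternatingEvenPoly_self (N : ℕ) (b : ℕ → ℝ) :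
    (alternatingEvenPoly N b).coeff N = b 0 := by
  rw [alternatingEvenPoly, finsetSum_coeff, sum_eq_single 0]
  · simp
  · intro k hk hk0
    have : k ≤ N / 2 := Nat.lt_succ_iff.mp (mem_range.mp hk)
    rw [coeff_C_mul, coeff_X_pow, if_neg (by omega), mul_zero]
  · simp

theorem coeff_zero_eq_one_of_charpoly_mul_eq {ι κ : Type*} [Fintype ι] [DecidableEq ι]
    [Fintype κ] [DecidableEq κ] {A : Matrix ι ι ℝ} {B : Matrix κ κ ℝ} {N : ℕ} {b : ℕ → ℝ}
    (hN : Fintype.card ι + Fintype.card κ = N)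
    (h : A.charpoly * B.charpoly = alternatingEvenPoly N b) : b 0 = 1 := by
  rw [← coeff_alternatingEvenPoly_self N b, ← h, ← hN, ← A.charpoly_natDegree_eq_dim,
    ← B.charpoly_natDegree_eq_dim, ← A.charpoly_monic.natDegree_mul B.charpoly_monic]
  exact (A.charpoly_monic.mul B.charpoly_monic).coeff_natDegree

noncomputable def spectralMinorPoly {ι : Type*} [Fintype ι] [DecidableEq ι]
    (lam wt : ι → ℝ) : ℝ[X] :=
  ∑ j, C (wt j) * ∏ k ∈ univ.erase j, (X - C (lam k))

open scoped MatrixOrder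

namespace Matrix

variable {n : Type*} [Fintype n] [DecidableEq n]

theorem absMat_eq_cfcSqrt (A : Matrix n n ℝ) : absMat A = CFC.sqrt (A * Aᴴ) := by
  have hP := posSemidef_self_mul_conjTranspose A
  rw [CFC.sqrt_eq_cfc, cfc_nnreal_eq_real _ _ (nonneg_iff_posSemidef.mpr hP), hP.1.cfc_eq]
  simp only [absMat, IsHermitian.cfc, Unitary.conjStarAlgAut_apply]
  congr 3
  funext i
  simp only [Function.comp_apply, Real.coe_sqrt, Real.coe_toNNReal',
    max_eq_left (hP.eigenvalues_nonneg i)]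
  rfl

theorem IsHermitian.absMat_eq {A : Matrix n n ℝ} (hA : A.IsHermitian) :
    absMat A = hA.cfc (|·|) := by
  have habs : CFC.abs A = cfc (‖·‖) A := CFC.abs_eq_cfc_norm A hA.isSelfAdjoint
  rw [CFC.abs, star_eq_conjTranspose, hA.eq, hA.cfc_eq] at habs
  rw [absMat_eq_cfcSqrt, hA.eq, habs]
  rfl

section CommRing

variable {R : Type*} [CommRing R]

theorem charpoly_submatrix_succAbove_eq_adjugate {p : ℕ}
    (M : Matrix (Fin (p + 1)) (Fin (p + 1)) R) (u : Fin (p + 1)) :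
    (M.submatrix u.succAbove u.succAbove).charpoly = M.charmatrix.adjugate u u := by
  have hsub : charmatrix (M.submatrix u.succAbove u.succAbove)
      = M.charmatrix.submatrix u.succAbove u.succAbove := by
    ext i j
    by_cases h : i = j <;> simp [h]
  rw [adjugate_fin_succ_eq_det_submatrix, Even.neg_one_pow ⟨u, rfl⟩, one_mul, charpoly, hsub]

theorem adjugate_conj_of_mul_eq_one {W W' : Matrix n n R} (h : W * W' = 1) (M : Matrix n n R) :
    (W * M * W').adjugate = W * M.adjugate * W' := by
  have h' : W' * W = 1 := mul_eq_one_comm.mp h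
  have hW : W.adjugate = W.det • W' := by
    calc W.adjugate = W.adjugate * W * W' := by rw [Matrix.mul_assoc, h, Matrix.mul_one]
      _ = W.det • W' := by rw [adjugate_mul, smul_mul, Matrix.one_mul]
  have hW' : W'.adjugate = W'.det • W := by
    calc W'.adjugate = W'.adjugate * W' * W := by rw [Matrix.mul_assoc, h', Matrix.mul_one]
      _ = W'.det • W := by rw [adjugate_mul, smul_mul, Matrix.one_mul]
  have hdet : W.det * W'.det = 1 := by rw [← det_mul, h, det_one]
  rw [adjugate_mul_distrib, adjugate_mul_distrib, hW, hW']
  simp only [smul_mul, Matrix.mul_smul, Matrix.mul_assoc, smul_smul, hdet, one_smul]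

theorem charmatrix_conj_of_mul_eq_one {W W' : Matrix n n R} (h : W * W' = 1) (M : Matrix n n R) :
    charmatrix (W * M * W') = W.map C * charmatrix M * W'.map C := by
  have hC : W.map C * W'.map C = 1 := by
    rw [← Matrix.map_mul, h, Matrix.map_one _ C.map_zero C.map_one]
  have hX : W.map C * scalar n (X : R[X]) * W'.map C = scalar n X := by
    rw [← (scalar_commute (X : R[X]) (fun _ => Commute.all _ _) _).eq, Matrix.mul_assoc, hC,
      Matrix.mul_one]
  simp only [charmatrix, RingHom.mapMatrix_apply, Matrix.map_mul, Matrix.mul_sub,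
    Matrix.sub_mul, hX]

end CommRing

namespace IsHermitian

variable {A : Matrix n n ℝ} (hA : A.IsHermitian)

noncomputable def spectralWeight (u j : n) : ℝ :=
  (hA.eigenvectorUnitary : Matrix n n ℝ) u j ^ 2

theorem spectralWeight_nonneg (u j : n) : 0 ≤ hA.spectralWeight u j := sq_nonneg _

theorem sum_spectralWeight (u : n) : ∑ j, hA.spectralWeight u j = 1 := by
  have h := congrFun (congrFun (Unitary.coe_mul_star_self hA.eigenvectorUnitary) u) u
  simpa [mul_apply, spectralWeight, sq] using h

theorem absMat_apply_self (u : n) :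
    absMat A u u = ∑ j, hA.spectralWeight u j * |hA.eigenvalues j| := by
  rw [hA.absMat_eq, IsHermitian.cfc, Unitary.conjStarAlgAut_apply, mul_apply]
  refine sum_congr rfl fun j _ => ?_
  simp only [RCLike.ofReal_real_eq_id, CompTriple.comp_eq, mul_diagonal, eigenvectorUnitary_apply,
    Function.comp_apply, star_apply, star_trivial, spectralWeight, sq]
  ring

theorem eq_conj_diagonal :
    A = (hA.eigenvectorUnitary : Matrix n n ℝ) * diagonal hA.eigenvalues *
      star (hA.eigenvectorUnitary : Matrix n n ℝ) := by
  simpa using hA.spectral_theorem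

end IsHermitian

theorem IsHermitian.charpoly_submatrix_succAbove {p : ℕ}
    {A : Matrix (Fin (p + 1)) (Fin (p + 1)) ℝ} (hA : A.IsHermitian) (u : Fin (p + 1)) :
    (A.submatrix u.succAbove u.succAbove).charpoly
      = spectralMinorPoly hA.eigenvalues (hA.spectralWeight u) := by
  set V : Matrix (Fin (p + 1)) (Fin (p + 1)) ℝ := ↑hA.eigenvectorUnitary
  have hV : V * star V = 1 := Unitary.coe_mul_star_self _
  have hVC : V.map C * (star V).map C = 1 := by
    rw [← Matrix.map_mul, hV, Matrix.map_one _ C.map_zero C.map_one]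
  have hchar : A.charmatrix
      = V.map C * diagonal (fun k => X - C (hA.eigenvalues k)) * (star V).map C := by
    rw [← charmatrix_diagonal, ← charmatrix_conj_of_mul_eq_one hV, ← hA.eq_conj_diagonal]
  rw [charpoly_submatrix_succAbove_eq_adjugate, hchar, adjugate_conj_of_mul_eq_one hVC,
    adjugate_diagonal, mul_apply, spectralMinorPoly]
  refine sum_congr rfl fun j _ => ?_
  simp only [mul_diagonal, map_apply, eigenvectorUnitary_apply, star_apply, star_trivial,
    spectralWeight, sq, map_mul, V]
  ring

end Matrix

section ComplexEvaluation

open Complex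

theorem I_mul_sub_ne_zero {t : ℝ} (ht : t ≠ 0) (a : ℝ) : (t : ℂ) * I - a ≠ 0 := by
  intro h
  simpa [ht] using congrArg im h

theorem aeval_I_mul_alternatingEvenPoly (N : ℕ) (b : ℕ → ℝ) (t : ℝ) :
    aeval (t * I) (alternatingEvenPoly N b)
      = I ^ N * ↑(∑ k ∈ range (N / 2 + 1), b k * t ^ (N - 2 * k)) := by
  rw [alternatingEvenPoly, map_sum, ofReal_sum, mul_sum]
  refine sum_congr rfl fun k hk => ?_
  have h2k : 2 * k ≤ N := by
    have : k ≤ N / 2 := Nat.lt_succ_iff.mp (mem_range.mp hk)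
    omega
  have hIN : I ^ N = (-1) ^ k * I ^ (N - 2 * k) := by
    rw [← I_sq, ← pow_mul, ← pow_add, Nat.add_sub_cancel' h2k]
  simp only [map_mul, aeval_C, map_pow, aeval_X, hIN, mul_pow, coe_algebraMap, ofReal_mul,
    ofReal_pow, ofReal_neg, ofReal_one]
  ring

variable {ι κ : Type*} [Fintype ι] [Fintype κ]

theorem aeval_spectralMinorPoly [DecidableEq ι] {lam : ι → ℝ} (wt : ι → ℝ) {z : ℂ}
    (hz : ∀ k, z - lam k ≠ 0) :
    aeval z (spectralMinorPoly lam wt)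
      = (∏ k, (z - lam k)) * ∑ j, (wt j : ℂ) / (z - lam j) := by
  rw [spectralMinorPoly, map_sum, mul_sum]
  refine sum_congr rfl fun j _ => ?_
  rw [← mul_prod_erase univ (fun k => z - lam k) (mem_univ j)]
  simp only [map_mul, aeval_C, map_prod, map_sub, aeval_X, coe_algebraMap]
  field_simp [hz j]

theorem im_sum_div_I_mul_sub (t : ℝ) (lam wt : ι → ℝ) :
    (∑ j, (wt j : ℂ) / (t * I - lam j)).im = -t * ∑ j, wt j / (lam j ^ 2 + t ^ 2) := by
  rw [im_sum, mul_sum]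
  refine sum_congr rfl fun j _ => ?_
  rw [div_eq_mul_inv, im_ofReal_mul, inv_im, normSq_apply]
  simp only [sub_im, mul_im, ofReal_re, I_im, mul_one, ofReal_im, I_re, mul_zero, add_zero,
    sub_zero, sub_re, mul_re, sub_self, zero_sub, mul_neg, neg_mul, neg_neg]
  ring

theorem sum_div_sq_add_sq_le_of_coeff_le [DecidableEq ι] [DecidableEq κ]
    {lam₁ wt₁ : ι → ℝ} {lam₂ wt₂ : κ → ℝ}
    (hwt₂ : ∀ j, 0 ≤ wt₂ j) {N : ℕ} {b c : ℕ → ℝ} (hb : ∀ k, 0 ≤ b k) (hb0 : b 0 = 1)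
    (hbc : ∀ k, c k ≤ b k)
    (h₁ : (∏ k, (X - C (lam₁ k))) * spectralMinorPoly lam₂ wt₂ = alternatingEvenPoly N b)
    (h₂ : (∏ k, (X - C (lam₂ k))) * spectralMinorPoly lam₁ wt₁ = alternatingEvenPoly N c)
    {t : ℝ} (ht : 0 < t) :
    ∑ j, wt₁ j / (lam₁ j ^ 2 + t ^ 2) ≤ ∑ j, wt₂ j / (lam₂ j ^ 2 + t ^ 2) := by
  set β := ∑ k ∈ range (N / 2 + 1), b k * t ^ (N - 2 * k)
  set γ := ∑ k ∈ range (N / 2 + 1), c k * t ^ (N - 2 * k)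
  have hβ : 0 < β := sum_pos' (fun k _ => mul_nonneg (hb k) (by positivity))
    ⟨0, mem_range.mpr (N / 2).succ_pos, by rw [hb0]; positivity⟩
  have hγβ : γ ≤ β := sum_le_sum fun k _ => mul_le_mul_of_nonneg_right (hbc k) (by positivity)
  have hz₁ : ∀ k, t * I - lam₁ k ≠ 0 := fun k => I_mul_sub_ne_zero ht.ne' _
  have hz₂ : ∀ k, t * I - lam₂ k ≠ 0 := fun k => I_mul_sub_ne_zero ht.ne' _
  set P₁ := ∏ k, (t * I - lam₁ k)
  set P₂ := ∏ k, (t * I - lam₂ k)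
  set G₁ := ∑ j, (wt₁ j : ℂ) / (t * I - lam₁ j)
  set G₂ := ∑ j, (wt₂ j : ℂ) / (t * I - lam₂ j)
  have e₁ : P₁ * (P₂ * G₂) = I ^ N * β := by
    have h := congrArg (aeval ((t : ℂ) * I)) h₁
    simp only [map_mul, aeval_spectralMinorPoly wt₂ hz₂, aeval_I_mul_alternatingEvenPoly,
      map_prod, map_sub, aeval_X, aeval_C, coe_algebraMap] at h
    exact h
  have e₂ : P₂ * (P₁ * G₁) = I ^ N * γ := by
    have h := congrArg (aeval ((t : ℂ) * I)) h₂
    simp only [map_mul, aeval_spectralMinorPoly wt₁ hz₁, aeval_I_mul_alternatingEvenPoly,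
      map_prod, map_sub, aeval_X, aeval_C, coe_algebraMap] at h
    exact h
  have hG : (γ : ℂ) * G₂ = β * G₁ := by
    have hP : P₁ * P₂ * I ^ N ≠ 0 := by simp [P₁, P₂, prod_ne_zero_iff, hz₁, hz₂]
    apply mul_left_cancel₀ hP
    linear_combination (I ^ N * γ) * e₁ - (I ^ N * β) * e₂
  set r₁ := ∑ j, wt₁ j / (lam₁ j ^ 2 + t ^ 2)
  set r₂ := ∑ j, wt₂ j / (lam₂ j ^ 2 + t ^ 2)
  have him : γ * (-t * r₂) = β * (-t * r₁) := by
    simpa only [G₁, G₂, im_ofReal_mul, im_sum_div_I_mul_sub] using congrArg im hG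
  have hkey : β * r₁ = γ * r₂ :=
    mul_left_cancel₀ (neg_ne_zero.mpr ht.ne') (by linear_combination -him)
  have hr₂ : 0 ≤ r₂ := sum_nonneg fun j _ => div_nonneg (hwt₂ j) (by positivity)
  refine le_of_mul_le_mul_left ?_ hβ
  calc β * r₁ = γ * r₂ := hkey
    _ ≤ β * r₂ := mul_le_mul_of_nonneg_right hγβ hr₂

end ComplexEvaluation

section CoulsonIntegral

open MeasureTheory

theorem sq_div_sq_add_sq_eq_inv_one_add_sq {a : ℝ} (ha : a ≠ 0) :
    (fun t : ℝ => a ^ 2 / (a ^ 2 + t ^ 2)) = fun t => (1 + (a⁻¹ * t) ^ 2)⁻¹ := by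
  funext t
  field_simp

theorem integrable_sq_div_sq_add_sq (a : ℝ) :
    Integrable fun t : ℝ => a ^ 2 / (a ^ 2 + t ^ 2) := by
  rcases eq_or_ne a 0 with rfl | ha
  · simp
  · rw [sq_div_sq_add_sq_eq_inv_one_add_sq ha]
    exact integrable_inv_one_add_sq.comp_mul_left' (inv_ne_zero ha)

theorem integral_sq_div_sq_add_sq (a : ℝ) :
    ∫ t : ℝ, a ^ 2 / (a ^ 2 + t ^ 2) = Real.pi * |a| := by
  rcases eq_or_ne a 0 with rfl | ha
  · simp
  · rw [sq_div_sq_add_sq_eq_inv_one_add_sq ha,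
      Measure.integral_comp_inv_mul_left (fun t : ℝ => (1 + t ^ 2)⁻¹) a,
      integral_univ_inv_one_add_sq, smul_eq_mul, mul_comm]

section WeightedSums

variable {ι κ : Type*} [Fintype ι] [Fintype κ]

theorem integrable_sum_mul_sq_div (lam wt : ι → ℝ) :
    Integrable fun t : ℝ => ∑ j, wt j * (lam j ^ 2 / (lam j ^ 2 + t ^ 2)) :=
  integrable_finsetSum _ fun j _ => (integrable_sq_div_sq_add_sq (lam j)).const_mul (wt j)

theorem integral_sum_mul_sq_div (lam wt : ι → ℝ) :
    ∫ t : ℝ, ∑ j, wt j * (lam j ^ 2 / (lam j ^ 2 + t ^ 2))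
      = Real.pi * ∑ j, wt j * |lam j| := by
  rw [integral_finsetSum _ fun j _ => (integrable_sq_div_sq_add_sq (lam j)).const_mul (wt j),
    mul_sum]
  refine sum_congr rfl fun j _ => ?_
  rw [integral_const_mul, integral_sq_div_sq_add_sq]
  ring

theorem sum_mul_sq_div_eq_sub {t : ℝ} (ht : t ≠ 0) (lam wt : ι → ℝ) :
    ∑ j, wt j * (lam j ^ 2 / (lam j ^ 2 + t ^ 2))
      = ∑ j, wt j - t ^ 2 * ∑ j, wt j / (lam j ^ 2 + t ^ 2) := by
  rw [mul_sum, ← sum_sub_distrib]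
  refine sum_congr rfl fun j _ => ?_
  have : lam j ^ 2 + t ^ 2 ≠ 0 := by positivity
  field_simp
  ring

theorem sum_mul_abs_le_of_sum_div_le {lam₁ wt₁ : ι → ℝ} {lam₂ wt₂ : κ → ℝ}
    (hwt : ∑ j, wt₁ j = ∑ j, wt₂ j)
    (h : ∀ t, 0 < t →
      ∑ j, wt₁ j / (lam₁ j ^ 2 + t ^ 2) ≤ ∑ j, wt₂ j / (lam₂ j ^ 2 + t ^ 2)) :
    ∑ j, wt₂ j * |lam₂ j| ≤ ∑ j, wt₁ j * |lam₁ j| := by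
  have hpt : ∀ t : ℝ, t ≠ 0 → ∑ j, wt₂ j * (lam₂ j ^ 2 / (lam₂ j ^ 2 + t ^ 2))
      ≤ ∑ j, wt₁ j * (lam₁ j ^ 2 / (lam₁ j ^ 2 + t ^ 2)) := by
    intro t ht
    have hr := h |t| (abs_pos.mpr ht)
    rw [sq_abs] at hr
    rw [sum_mul_sq_div_eq_sub ht, sum_mul_sq_div_eq_sub ht, hwt]
    nlinarith [mul_le_mul_of_nonneg_left hr (sq_nonneg t)]
  have hint := integral_mono_ae (integrable_sum_mul_sq_div lam₂ wt₂)
    (integrable_sum_mul_sq_div lam₁ wt₁) ((Measure.ae_ne volume 0).mono hpt)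
  rw [integral_sum_mul_sq_div, integral_sum_mul_sq_div] at hint
  exact le_of_mul_le_mul_left hint Real.pi_pos

end WeightedSums

end CoulsonIntegral

theorem isHermitian_adjMat {V : Type*} [Fintype V] (G : SimpleGraph V) :
    (adjMat G).IsHermitian :=
  letI := Classical.decRel G.Adj
  G.isHermitian_adjMatrix ℝ

theorem vertex_energy_quasiOrder_two_graphs_general {n m : ℕ}
    (G₁ : SimpleGraph (Fin (n + 1))) (G₂ : SimpleGraph (Fin (m + 1)))
    (v : Fin (n + 1)) (w : Fin (m + 1)) (b c : ℕ → ℝ)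
    (hb : ∀ k, 0 ≤ b k)
    (h1 : (adjMat G₁).charpoly
          * ((adjMat G₂).submatrix w.succAbove w.succAbove).charpoly
        = ∑ k ∈ Finset.range ((n + 1 + m) / 2 + 1),
            Polynomial.C ((-1 : ℝ) ^ k * b k) * Polynomial.X ^ (n + 1 + m - 2 * k))
    (h2 : (adjMat G₂).charpoly
          * ((adjMat G₁).submatrix v.succAbove v.succAbove).charpoly
        = ∑ k ∈ Finset.range ((n + 1 + m) / 2 + 1),
            Polynomial.C ((-1 : ℝ) ^ k * c k) * Polynomial.X ^ (n + 1 + m - 2 * k))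
    (hbc : ∀ k, c k ≤ b k) :
    vertexEnergy G₂ w ≤ vertexEnergy G₁ v := by
  have hA₁ := isHermitian_adjMat G₁
  have hA₂ := isHermitian_adjMat G₂
  have hb0 : b 0 = 1 := coeff_zero_eq_one_of_charpoly_mul_eq (by simp) h1
  rw [hA₁.charpoly_eq, hA₂.charpoly_submatrix_succAbove] at h1
  rw [hA₂.charpoly_eq, hA₁.charpoly_submatrix_succAbove] at h2
  rw [vertexEnergy, vertexEnergy, hA₁.absMat_apply_self, hA₂.absMat_apply_self]
  refine sum_mul_abs_le_of_sum_div_le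
    (by rw [hA₁.sum_spectralWeight, hA₂.sum_spectralWeight]) fun t ht => ?_
  exact sum_div_sq_add_sq_le_of_coeff_le (hA₂.spectralWeight_nonneg w) hb hb0 hbc h1 h2 ht

/-- comparing vertices of two disjoint bipartite graphs.
φ(G₁ ∪ (G₂ - w); x) = φ(G₁;x)·φ(G₂-w;x) and φ(G₂ ∪ (G₁ - v); x) = φ(G₂;x)·φ(G₁-v;x);
if each even coefficient b_{2k} of the first dominates the corresponding c_{2k} of
the second, then E_{G₂}(w) ≤ E_{G₁}(v). -/
theorem vertex_energy_quasiOrder_two_graphs {n m : ℕ}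
    (G₁ : SimpleGraph (Fin (n + 1))) (G₂ : SimpleGraph (Fin (m + 1)))
    (hG₁ : G₁.Colorable 2) (hG₂ : G₂.Colorable 2)
    (v : Fin (n + 1)) (w : Fin (m + 1)) (b c : ℕ → ℝ)
    (hb : ∀ k, 0 ≤ b k) (hc : ∀ k, 0 ≤ c k)
    (h1 : (adjMat G₁).charpoly
          * ((adjMat G₂).submatrix w.succAbove w.succAbove).charpoly
        = ∑ k ∈ Finset.range ((n + 1 + m) / 2 + 1),
            Polynomial.C ((-1 : ℝ) ^ k * b k) * Polynomial.X ^ (n + 1 + m - 2 * k))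
    (h2 : (adjMat G₂).charpoly
          * ((adjMat G₁).submatrix v.succAbove v.succAbove).charpoly
        = ∑ k ∈ Finset.range ((n + 1 + m) / 2 + 1),
            Polynomial.C ((-1 : ℝ) ^ k * c k) * Polynomial.X ^ (n + 1 + m - 2 * k))
    (hbc : ∀ k, c k ≤ b k) :
    vertexEnergy G₂ w ≤ vertexEnergy G₁ v :=
  vertex_energy_quasiOrder_two_graphs_general G₁ G₂ v w b c hb h1 h2 hbc
end

section
/- Let G be a finite bipartite graph with parts V_1 and V_2. Then Σ_{v ∈ V_1} E_G(v) = Σ_{v ∈ V_2} E_G(v) = (1/2) E(G). -/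
open Matrix BigOperators Finset Polynomial

/-- The energy of a graph: the trace of |A| (equivalently the sum of vertex energies). -/
noncomputable def graphEnergy {V : Type*} [Fintype V] [DecidableEq V]
    (G : SimpleGraph V) : ℝ :=
  Matrix.trace (absMat (adjMat G))

/-!
Let `D` be the diagonal matrix with entries `+1` on `V₁` and `-1` on `V₂`. Bipartiteness says
`D A = -A D`. Conjugating into an eigenbasis `Λ = U* A U` of `A`, the matrix `P = U* D U` still
anticommutes with `Λ`, so `P i i * λ i = -λ i * P i i`, i.e. `P i i = 0` whenever `λ i ≠ 0`.
Hence `tr (D |A|) = ∑ i, P i i * |λ i| = 0`, which says that the energies of the two parts agree;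
they add up to `tr |A|`.
-/

namespace Matrix

variable {n : Type*} [Fintype n] [DecidableEq n]

lemma mul_diag_eq_zero_of_mul_diagonal_eq_neg {R : Type*} [CommRing R] [IsAddTorsionFree R]
    {P : Matrix n n R} {d : n → R} (h : P * diagonal d = -(diagonal d * P)) (i : n) :
    P i i * d i = 0 := by
  have hi := congrFun (congrFun h i) i
  rw [mul_diagonal, neg_apply, diagonal_mul, mul_comm (d i)] at hi
  exact self_eq_neg.mp hi

lemma trace_conjStarAlgAut {R : Type*} [CommRing R] [StarRing R] (u : unitary (Matrix n n R))
    (X : Matrix n n R) : trace (Unitary.conjStarAlgAut R _ u X) = trace X := by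
  rw [Unitary.conjStarAlgAut_apply, trace_mul_cycle, Unitary.coe_star_mul_self, one_mul]

theorem IsHermitian.trace_mul_cfc_eq_zero {𝕜 : Type*} [RCLike 𝕜] {A D : Matrix n n 𝕜}
    (hA : A.IsHermitian) (hDA : D * A = -(A * D)) {f : ℝ → ℝ} (hf : f 0 = 0) :
    trace (D * cfc f A) = 0 := by
  set c := Unitary.conjStarAlgAut 𝕜 _ (star hA.eigenvectorUnitary)
  have hcA : c A = diagonal (RCLike.ofReal ∘ hA.eigenvalues) :=
    hA.conjStarAlgAut_star_eigenvectorUnitary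
  have hcf : c (cfc f A) = diagonal (RCLike.ofReal ∘ f ∘ hA.eigenvalues) := by
    rw [hA.cfc_eq, IsHermitian.cfc, ← Unitary.conjStarAlgAut_mul_apply]
    simp
  have hanti : c D * diagonal (RCLike.ofReal ∘ hA.eigenvalues) =
      -(diagonal (RCLike.ofReal ∘ hA.eigenvalues) * c D) := by
    rw [← hcA, ← map_mul, ← map_mul, hDA, map_neg]
  calc trace (D * cfc f A) = trace (c (D * cfc f A)) := (trace_conjStarAlgAut _ _).symm
    _ = ∑ i, c D i i * f (hA.eigenvalues i) := by
      simp [map_mul, hcf, trace, mul_diagonal]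
    _ = 0 := sum_eq_zero fun i _ => by
      obtain hP | hev := mul_eq_zero.mp (mul_diag_eq_zero_of_mul_diagonal_eq_neg hanti i)
      · rw [hP, zero_mul]
      · rw [show hA.eigenvalues i = 0 by simpa using hev, hf, RCLike.ofReal_zero, mul_zero]

lemma trace_diagonal_sign_mul {R : Type*} [CommRing R] (S : Finset n) (M : Matrix n n R) :
    trace (diagonal (fun i => if i ∈ S then 1 else -1) * M) =
      ∑ i ∈ S, M i i - ∑ i ∈ Sᶜ, M i i := by
  simp [trace, diagonal_mul, ite_mul, Finset.sum_ite, sub_eq_add_neg, filter_notMem_eq_sdiff,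
    compl_eq_univ_sdiff]

lemma absMat_eq_cfc_sqrt (A : Matrix n n ℝ) : absMat A = cfc Real.sqrt (A * Aᴴ) := by
  rw [(posSemidef_self_mul_conjTranspose A).1.cfc_eq, IsHermitian.cfc,
    Unitary.conjStarAlgAut_apply]
  rfl

lemma IsHermitian.absMat_eq_cfc_abs {A : Matrix n n ℝ} (hA : A.IsHermitian) :
    absMat A = cfc (fun x : ℝ => |x|) A := by
  have hsq : A * Aᴴ = cfc (fun x : ℝ => x * x) A := by
    rw [cfc_mul (fun x : ℝ => x) (fun x : ℝ => x) A, cfc_id' ℝ A, hA.eq]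
  rw [absMat_eq_cfc_sqrt, hsq, ← cfc_comp' Real.sqrt (fun x : ℝ => x * x) A]
  simp_rw [Real.sqrt_mul_self_eq_abs]

end Matrix

namespace SimpleGraph

variable {V : Type*} [Fintype V] (G : SimpleGraph V)

lemma adjMat_isHermitian : (adjMat G).IsHermitian := by
  classical
  rw [Matrix.IsHermitian, conjTranspose_eq_transpose_of_trivial]
  exact G.transpose_adjMatrix

lemma diagonal_mul_adjMat_eq_neg [DecidableEq V] {d : V → ℝ}
    (hd : ∀ a b, G.Adj a b → d a = -d b) :
    diagonal d * adjMat G = -(adjMat G * diagonal d) := by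
  ext a b
  rw [neg_apply, diagonal_mul, mul_diagonal]
  by_cases hab : G.Adj a b <;> simp [adjMat, adjMatrix_apply, hab, hd a b]

end SimpleGraph

/-- if G is bipartite with parts V₁ and V₂, then the sum of the vertex
energies over each part equals half the total energy. -/
theorem bipartite_parts_half_energy {V : Type*} [Fintype V] [DecidableEq V]
    (G : SimpleGraph V) (V₁ V₂ : Finset V)
    (hunion : V₁ ∪ V₂ = Finset.univ) (hdisj : Disjoint V₁ V₂)
    (hedge : ∀ a b : V, G.Adj a b → (a ∈ V₁ ∧ b ∈ V₂) ∨ (a ∈ V₂ ∧ b ∈ V₁)) :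
    (∑ v ∈ V₁, vertexEnergy G v = (1 / 2) * graphEnergy G) ∧
    (∑ v ∈ V₂, vertexEnergy G v = (1 / 2) * graphEnergy G) := by
  obtain rfl : V₁ᶜ = V₂ := (IsCompl.of_eq hdisj.eq_bot hunion).compl_eq
  have hsign : ∀ a b, G.Adj a b →
      (if a ∈ V₁ then 1 else -1 : ℝ) = -(if b ∈ V₁ then 1 else -1) := fun a b hab => by
    rcases hedge a b hab with ⟨ha, hb⟩ | ⟨ha, hb⟩ <;> simp_all
  have hA := G.adjMat_isHermitian
  have hbalance : ∑ v ∈ V₁, vertexEnergy G v - ∑ v ∈ V₁ᶜ, vertexEnergy G v = 0 := by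
    rw [← hA.trace_mul_cfc_eq_zero (G.diagonal_mul_adjMat_eq_neg hsign) abs_zero,
      ← hA.absMat_eq_cfc_abs, trace_diagonal_sign_mul]
    rfl
  have htotal : ∑ v ∈ V₁, vertexEnergy G v + ∑ v ∈ V₁ᶜ, vertexEnergy G v = graphEnergy G :=
    sum_add_sum_compl V₁ _
  constructor <;> linarith
end
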